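/- For a complex parameter α and nonnegative integers j, k, and x a real variable, the operator identity ((−α + E)∂_x)^j (e^{−x} x^k) = Σ_{l=0}^{∞} Σ_{i=0}^{j} C(j,i) (−1)^{j−i} (−α + l + 2k − i)_{j−i} ((−x)^l / l!) · ((−α + E)∂_x)^i x^k holds, where E = x∂_x is the Euler operator, C(j,i) is the binomial coefficient, and (a)_m is the rising Pochhammer symbol. -/

import Mathlib

/-- Rising Pochhammer symbol `(a)_n = a(a+1)⋯(a+n-1)`. -/
noncomputable def poch (a : ℂ) (n : ℕ) : ℂ := ∏ j ∈ Finset.range n, (a + j)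

/-- The operator `(-α + E)∂ₓ` where `E = x∂ₓ` is the Euler operator:
first differentiate, then apply `-α + E`. -/
noncomputable def T (α : ℂ) (f : ℝ → ℂ) : ℝ → ℂ :=
  fun x => (-α) * deriv f x + (x : ℂ) * deriv (deriv f) x

/-!
Conjugating by `e⁻ˣ` turns `T α` into the polynomial operator `W = eˣ ∘ T α ∘ e⁻ˣ`, so the left
side is `e⁻ˣ (Wʲ xᵏ)(x)`. On the right, `∑ₗ (a + l)ₘ zˡ / l! = eᶻ Sₘᵃ(-z)`, where
`Sₘᵃ = m! L_m^{(a-1)}` is a generalized Laguerre polynomial, so the right side is `e⁻ˣ Rⱼ(x)` with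
`Rⱼ = ∑_{i+m=j} C(j,i) (-1)ᵐ (Tⁱ xᵏ) Sₘ^{a_i}` and `a_i = -α + 2k - i`. Since `Tⁱ xᵏ` is
homogeneous of degree `k - i`, the three-term recurrences of the `Sₘᵃ` reduce `W Rⱼ = Rⱼ₊₁`
to Pascal's rule.
-/

open Polynomial Finset

noncomputable def pochSeriesPoly : ℕ → ℂ → ℂ[X]
  | 0, _ => 1
  | m + 1, a => C (a + m) * pochSeriesPoly m a - X * pochSeriesPoly m (a + 1)

@[simp]
lemma pochSeriesPoly_zero (a : ℂ) : pochSeriesPoly 0 a = 1 :=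
  rfl

lemma derivative_pochSeriesPoly (m : ℕ) (a : ℂ) :
    derivative (pochSeriesPoly m a) = pochSeriesPoly m a - pochSeriesPoly m (a + 1) := by
  induction m generalizing a with
  | zero => simp [pochSeriesPoly]
  | succ m ih =>
    simp only [pochSeriesPoly, derivative_sub, derivative_mul, derivative_C, derivative_X, ih,
      map_add, map_one]
    ring

lemma derivative_pochSeriesPoly_succ (m : ℕ) (a : ℂ) :
    derivative (pochSeriesPoly (m + 1) a) = -C ((m : ℂ) + 1) * pochSeriesPoly m (a + 1) := by
  induction m generalizing a with
  | zero => simp [pochSeriesPoly]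
  | succ m ih =>
    have h : pochSeriesPoly (m + 1) (a + 1)
        = C (a + 1 + m) * pochSeriesPoly m (a + 1) - X * pochSeriesPoly m (a + 1 + 1) := rfl
    rw [pochSeriesPoly, derivative_sub, derivative_mul, derivative_mul, derivative_C,
      derivative_X, ih, ih, h]
    simp only [map_add, map_one, map_natCast, Nat.cast_succ]
    ring

lemma pochSeriesPoly_succ_eq_sub (m : ℕ) (a : ℂ) :
    pochSeriesPoly (m + 1) a
      = pochSeriesPoly (m + 1) (a + 1) - C ((m : ℂ) + 1) * pochSeriesPoly m (a + 1) := by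
  linear_combination derivative_pochSeriesPoly_succ m a - derivative_pochSeriesPoly (m + 1) a

lemma poch_succ (a : ℂ) (n : ℕ) : poch a (n + 1) = poch a n * (a + n) :=
  prod_range_succ _ _

lemma hasSum_poch_mul_pow_div_factorial (m : ℕ) (a z : ℂ) :
    HasSum (fun l : ℕ => poch (a + l) m * z ^ l / l.factorial)
      (Complex.exp z * (pochSeriesPoly m a).eval (-z)) := by
  induction m generalizing a with
  | zero =>
    simpa [poch, pochSeriesPoly, Complex.exp_eq_exp_ℂ] using
      NormedSpace.expSeries_div_hasSum_exp z
  | succ m ih =>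
    set t := fun (b : ℂ) (l : ℕ) => poch (b + l) m * z ^ l / l.factorial
    have hshift : HasSum (fun l : ℕ => (l : ℂ) * t a l)
        (z * (Complex.exp z * (pochSeriesPoly m (a + 1)).eval (-z))) := by
      rw [← hasSum_nat_add_iff' 1, sum_range_one, Nat.cast_zero, zero_mul, sub_zero]
      have h : (fun l : ℕ => ((l + 1 : ℕ) : ℂ) * t a (l + 1)) = fun l => z * t (a + 1) l := by
        funext l
        simp only [t, Nat.factorial_succ]
        push_cast
        rw [show a + ((l : ℂ) + 1) = a + 1 + l by ring]
        field_simp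
        ring
      rw [h]
      exact (ih (a + 1)).mul_left z
    have hsplit : (fun l : ℕ => poch (a + l) (m + 1) * z ^ l / l.factorial)
        = fun l => (a + m) * t a l + l * t a l := by
      funext l
      simp only [t, poch_succ]
      ring
    have hval : Complex.exp z * (pochSeriesPoly (m + 1) a).eval (-z)
        = (a + m) * (Complex.exp z * (pochSeriesPoly m a).eval (-z))
          + z * (Complex.exp z * (pochSeriesPoly m (a + 1)).eval (-z)) := by
      simp only [pochSeriesPoly, eval_sub, eval_mul, eval_C, eval_X]
      ring
    rw [hsplit, hval]
    exact ((ih a).mul_left (a + m)).add hshift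

noncomputable def polyT (α : ℂ) (p : ℂ[X]) : ℂ[X] :=
  -C α * derivative p + X * derivative (derivative p)

noncomputable def expConjPolyT (α : ℂ) : ℂ[X] →ₗ[ℂ] ℂ[X] where
  toFun p := -C α * (derivative p - p) + X * (derivative (derivative p) - 2 * derivative p + p)
  map_add' p q := by
    simp only [map_add]
    ring
  map_smul' c p := by
    simp only [smul_eq_C_mul, derivative_C_mul, RingHom.id_apply]
    ring

lemma expConjPolyT_apply (α : ℂ) (p : ℂ[X]) : expConjPolyT α p
    = -C α * (derivative p - p) + X * (derivative (derivative p) - 2 * derivative p + p) :=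
  rfl

lemma deriv_eval_ofReal (p : ℂ[X]) :
    deriv (fun t : ℝ => p.eval (t : ℂ)) = fun t : ℝ => (derivative p).eval (t : ℂ) :=
  funext fun t => ((p.hasDerivAt (t : ℂ)).comp_ofReal).deriv

lemma deriv_exp_neg_mul_eval_ofReal (p : ℂ[X]) :
    deriv (fun t : ℝ => Complex.exp (-t) * p.eval (t : ℂ))
      = fun t : ℝ => Complex.exp (-t) * (derivative p - p).eval (t : ℂ) := by
  funext t
  have hexp : HasDerivAt (fun s : ℝ => Complex.exp (-s)) (-Complex.exp (-t)) t := by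
    simpa using ((Complex.hasDerivAt_exp (-(t : ℂ))).comp (t : ℂ) (hasDerivAt_neg _)).comp_ofReal
  refine (hexp.mul (p.hasDerivAt (t : ℂ)).comp_ofReal).deriv.trans ?_
  rw [eval_sub]
  ring

lemma T_eval (α : ℂ) (p : ℂ[X]) :
    T α (fun t : ℝ => p.eval (t : ℂ)) = fun t : ℝ => (polyT α p).eval (t : ℂ) := by
  funext t
  simp only [T, polyT, deriv_eval_ofReal, eval_add, eval_mul, eval_neg, eval_C, eval_X]

lemma T_exp_neg_mul_eval (α : ℂ) (p : ℂ[X]) :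
    T α (fun t : ℝ => Complex.exp (-t) * p.eval (t : ℂ))
      = fun t : ℝ => Complex.exp (-t) * (expConjPolyT α p).eval (t : ℂ) := by
  funext t
  rw [T, deriv_exp_neg_mul_eval_ofReal, deriv_exp_neg_mul_eval_ofReal]
  simp only [expConjPolyT_apply, derivative_sub, eval_add, eval_sub, eval_mul, eval_neg, eval_C,
    eval_X, eval_ofNat]
  ring

lemma iterate_T_eval (α : ℂ) (p : ℂ[X]) (n : ℕ) :
    (T α)^[n] (fun t : ℝ => p.eval (t : ℂ)) = fun t : ℝ => ((polyT α)^[n] p).eval (t : ℂ) :=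
  (Function.Semiconj.iterate_right (f := fun (q : ℂ[X]) (t : ℝ) => q.eval (t : ℂ))
    (fun q => (T_eval α q).symm) n p).symm

lemma iterate_T_exp_neg_mul_eval (α : ℂ) (p : ℂ[X]) (n : ℕ) :
    (T α)^[n] (fun t : ℝ => Complex.exp (-t) * p.eval (t : ℂ))
      = fun t : ℝ => Complex.exp (-t) * ((expConjPolyT α)^[n] p).eval (t : ℂ) :=
  (Function.Semiconj.iterate_right
    (f := fun (q : ℂ[X]) (t : ℝ) => Complex.exp (-t) * q.eval (t : ℂ))
    (fun q => (T_exp_neg_mul_eval α q).symm) n p).symm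

lemma X_mul_derivative_derivative {p : ℂ[X]} {e : ℂ} (h : X * derivative p = C e * p) :
    X * derivative (derivative p) = C (e - 1) * derivative p := by
  have h' := congrArg derivative h
  simp only [derivative_mul, derivative_X, derivative_C, one_mul, zero_mul, zero_add] at h'
  rw [map_sub, map_one]
  linear_combination h'

lemma polyT_eq_of_X_mul_derivative {p : ℂ[X]} {e : ℂ} (α : ℂ) (h : X * derivative p = C e * p) :
    polyT α p = C (e - 1 - α) * derivative p := by
  rw [polyT, X_mul_derivative_derivative h]
  simp only [map_sub]
  ring

lemma X_mul_derivative_iterate_polyT (α : ℂ) (k i : ℕ) :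
    X * derivative ((polyT α)^[i] (X ^ k)) = C ((k : ℂ) - i) * (polyT α)^[i] (X ^ k) := by
  induction i with
  | zero =>
    rcases k with _ | k
    · simp
    · simp only [Function.iterate_zero, id_eq, derivative_X_pow, Nat.cast_zero, sub_zero]
      simp only [Nat.add_sub_cancel]
      ring
  | succ i ih =>
    rw [Function.iterate_succ_apply', polyT_eq_of_X_mul_derivative α ih, derivative_C_mul,
      mul_left_comm, X_mul_derivative_derivative ih]
    simp only [map_sub, map_natCast, Nat.cast_succ, map_add, map_one]
    ring

lemma expConjPolyT_mul_pochSeriesPoly {p : ℂ[X]} {e : ℂ} (α : ℂ)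
    (h : X * derivative p = C e * p) (m : ℕ) (a : ℂ) :
    expConjPolyT α (p * pochSeriesPoly m a)
      = polyT α p * pochSeriesPoly m a
        + C (α - 2 * e + a + m + 1) * (p * pochSeriesPoly m (a + 1))
        - p * pochSeriesPoly (m + 1) (a + 1) := by
  have hS := derivative_pochSeriesPoly m a
  have hS₁ := derivative_pochSeriesPoly m (a + 1)
  have hrec : pochSeriesPoly (m + 1) (a + 1)
      = C (a + 1 + m) * pochSeriesPoly m (a + 1) - X * pochSeriesPoly m (a + 1 + 1) := rfl
  rw [expConjPolyT_apply, polyT, hrec]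
  simp only [derivative_mul, derivative_add, derivative_sub, hS, hS₁]
  simp only [map_add, map_sub, map_mul, map_one, map_ofNat]
  linear_combination (-2 * pochSeriesPoly m (a + 1)) * h

lemma sum_antidiagonal_choose_neg_one_pow_smul {R M : Type*} [CommRing R] [AddCommGroup M]
    [Module R M] (v w : ℕ → ℕ → M) (h0 : ∀ i, v i 0 = w i 0)
    (hsucc : ∀ i m, v i (m + 1) = w i (m + 1) - ((m + 1 : ℕ) : R) • w i m) (j : ℕ) :
    ∑ p ∈ antidiagonal (j + 1), (j + 1).choose p.1 • ((-1 : R) ^ p.2 • v p.1 p.2)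
      = ∑ p ∈ antidiagonal j, j.choose p.1 • ((-1 : R) ^ p.2 •
          (w (p.1 + 1) p.2 + ((j + 1 : ℕ) : R) • w p.1 p.2 - w p.1 (p.2 + 1))) := by
  have hA : ∑ p ∈ antidiagonal (j + 1), (j + 1).choose p.1 • ((-1 : R) ^ p.2 • w p.1 p.2)
      = ∑ p ∈ antidiagonal j, (j.choose p.1 • ((-1 : R) ^ (p.2 + 1) • w p.1 (p.2 + 1))
          + j.choose p.1 • ((-1 : R) ^ p.2 • w (p.1 + 1) p.2)) := by
    rw [sum_antidiagonal_choose_succ_nsmul (fun i m => (-1 : R) ^ m • w i m), ← sum_add_distrib]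
    refine sum_congr rfl fun p hp => ?_
    rw [Nat.choose_symm_of_eq_add (mem_antidiagonal.mp hp).symm]
  have hB : ∑ p ∈ antidiagonal (j + 1), (j + 1).choose p.1 • ((-1 : R) ^ p.2 • (v p.1 p.2 - w p.1 p.2))
      = ∑ p ∈ antidiagonal j, j.choose p.1 • ((-1 : R) ^ p.2 • (((j + 1 : ℕ) : R) • w p.1 p.2)) := by
    rw [Nat.sum_antidiagonal_succ', h0, sub_self, smul_zero, smul_zero, zero_add]
    refine sum_congr rfl fun p hp => ?_
    obtain ⟨i, m⟩ := p
    have him : i + m = j := mem_antidiagonal.mp hp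
    have hchoose : ((j + 1).choose i : R) * (m + 1) = (j + 1) * j.choose i := by
      rw [Nat.choose_symm_of_eq_add (show j + 1 = i + (m + 1) by omega),
        Nat.choose_symm_of_eq_add him.symm]
      exact_mod_cast congrArg (Nat.cast : ℕ → R) (Nat.add_one_mul_choose_eq j m).symm
    rw [hsucc, sub_sub_cancel_left]
    simp only [← Nat.cast_smul_eq_nsmul R, smul_smul, ← neg_smul]
    congr 1
    push_cast
    linear_combination (-1 : R) ^ m * hchoose
  calc ∑ p ∈ antidiagonal (j + 1), (j + 1).choose p.1 • ((-1 : R) ^ p.2 • v p.1 p.2)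
      = ∑ p ∈ antidiagonal (j + 1), (j + 1).choose p.1 • ((-1 : R) ^ p.2 • w p.1 p.2)
        + ∑ p ∈ antidiagonal (j + 1), (j + 1).choose p.1 •
          ((-1 : R) ^ p.2 • (v p.1 p.2 - w p.1 p.2)) := by
        rw [← sum_add_distrib]
        refine sum_congr rfl fun p _ => ?_
        rw [← smul_add, ← smul_add, add_sub_cancel]
    _ = _ := by
        rw [hA, hB, ← sum_add_distrib]
        refine sum_congr rfl fun p _ => ?_
        module

section ClosedForm

variable (α : ℂ) (k : ℕ)

noncomputable def expConjIterate (j : ℕ) : ℂ[X] :=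
  ∑ p ∈ antidiagonal j, j.choose p.1 •
    ((-1 : ℂ) ^ p.2 • ((polyT α)^[p.1] (X ^ k) * pochSeriesPoly p.2 (-α + 2 * k - p.1)))

lemma expConjPolyT_iterate_polyT_mul (i m : ℕ) :
    expConjPolyT α ((polyT α)^[i] (X ^ k) * pochSeriesPoly m (-α + 2 * k - i))
      = (polyT α)^[i + 1] (X ^ k) * pochSeriesPoly m (-α + 2 * k - (i + 1 : ℕ) + 1)
        + ((i + m + 1 : ℕ) : ℂ) • ((polyT α)^[i] (X ^ k) * pochSeriesPoly m (-α + 2 * k - i + 1))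
        - (polyT α)^[i] (X ^ k) * pochSeriesPoly (m + 1) (-α + 2 * k - i + 1) := by
  rw [expConjPolyT_mul_pochSeriesPoly α (X_mul_derivative_iterate_polyT α k i),
    Function.iterate_succ_apply', smul_eq_C_mul]
  congr 4
  · push_cast
    ring
  · push_cast
    ring

lemma expConjPolyT_expConjIterate (j : ℕ) :
    expConjPolyT α (expConjIterate α k j) = expConjIterate α k (j + 1) := by
  set q := fun i => (polyT α)^[i] (X ^ k)
  rw [expConjIterate, expConjIterate,
    sum_antidiagonal_choose_neg_one_pow_smul (R := ℂ)
      (fun i m => q i * pochSeriesPoly m (-α + 2 * k - i))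
      (fun i m => q i * pochSeriesPoly m (-α + 2 * k - i + 1)) (fun i => by simp)
      (fun i m => by rw [pochSeriesPoly_succ_eq_sub, smul_eq_C_mul]; push_cast; ring), map_sum]
  refine sum_congr rfl fun p hp => ?_
  rw [map_nsmul, map_smul, expConjPolyT_iterate_polyT_mul, mem_antidiagonal.mp hp]

end ClosedForm

lemma iterate_expConjPolyT_X_pow (α : ℂ) (k j : ℕ) :
    (expConjPolyT α)^[j] (X ^ k) = expConjIterate α k j := by
  induction j with
  | zero => simp [expConjIterate]
  | succ j ih => rw [Function.iterate_succ_apply', ih, expConjPolyT_expConjIterate]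

lemma hasSum_binomial_poch_series (α : ℂ) (j k : ℕ) (x : ℝ) :
    HasSum (fun l : ℕ => ∑ i ∈ range (j + 1),
        (j.choose i : ℂ) * (-1 : ℂ) ^ (j - i) * poch (-α + l + 2 * k - i) (j - i)
          * ((-(x : ℂ)) ^ l / (Nat.factorial l : ℂ)) * ((polyT α)^[i] (X ^ k)).eval (x : ℂ))
      (Complex.exp (-x) * (expConjIterate α k j).eval (x : ℂ)) := by
  rw [expConjIterate, eval_finsetSum, mul_sum,
    Nat.sum_antidiagonal_eq_sum_range_succ (fun i m => Complex.exp (-(x : ℂ)) * eval (x : ℂ)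
      (j.choose i • ((-1 : ℂ) ^ m • ((polyT α)^[i] (X ^ k) * pochSeriesPoly m (-α + 2 * k - i)))))]
  refine hasSum_sum fun i _ => ?_
  set c := (j.choose i : ℂ) * (-1) ^ (j - i) * ((polyT α)^[i] (X ^ k)).eval (x : ℂ)
  have hseries : HasSum
      (fun l : ℕ => c * (poch (-α + 2 * k - i + l) (j - i) * (-(x : ℂ)) ^ l / l.factorial))
      (c * (Complex.exp (-x) * (pochSeriesPoly (j - i) (-α + 2 * k - i)).eval (x : ℂ))) := by
    simpa using (hasSum_poch_mul_pow_div_factorial (j - i) (-α + 2 * k - i) (-x)).mul_left c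
  convert hseries using 1
  · funext l
    rw [show -α + l + 2 * k - i = -α + 2 * k - i + l by ring]
    ring
  · simp only [c, eval_smul, eval_mul, eval_natCast, nsmul_eq_mul, smul_eq_mul]
    ring

/-- Operator identity:
`((-α+E)∂ₓ)^j (e^{-x} x^k) = Σ_{l≥0} Σ_{i=0}^{j} C(j,i) (-1)^{j-i} (-α+l+2k-i)_{j-i} ((-x)^l/l!) ((-α+E)∂ₓ)^i x^k`. -/
theorem stmt8 (α : ℂ) (j k : ℕ) (x : ℝ) :
    (T α)^[j] (fun t : ℝ => Complex.exp (-t) * (t : ℂ) ^ k) x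
      = ∑' l : ℕ, ∑ i ∈ Finset.range (j + 1),
          (j.choose i : ℂ) * (-1 : ℂ) ^ (j - i)
            * poch (-α + l + 2 * k - i) (j - i)
            * ((-(x : ℂ)) ^ l / (Nat.factorial l : ℂ))
            * ((T α)^[i] (fun t : ℝ => (t : ℂ) ^ k) x) := by
  have hpow : ∀ t : ℝ, (t : ℂ) ^ k = (X ^ k : ℂ[X]).eval (t : ℂ) := by simp
  simp only [hpow, iterate_T_eval, iterate_T_exp_neg_mul_eval, iterate_expConjPolyT_X_pow]
  exact (hasSum_binomial_poch_series α j k x).tsum_eq.symm
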